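/- (Uniform gradient deviation bound used in the matrix sensing application.) Let Y and M be N×N real symmetric matrices and set Δ = Y − M. Then for every X ∈ St(N,r), ‖grad f(X) − grad g(X)‖_F = ‖(X Xᵀ − I_N) Δ X N_r − (1/2) X Xᵀ Δ X N_r + (1/2) X N_r Xᵀ Δ X‖_F ≤ (3/2) r^{3/2} ‖Y − M‖, where ‖·‖ denotes the spectral norm and ‖·‖_F the Frobenius norm. -/

import Mathlib

open Matrix

/-- The diagonal weight matrix `N_r = diag(r, r−1, …, 1)`. -/
noncomputable def Nr (r : ℕ) : Matrix (Fin r) (Fin r) ℝ :=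
  Matrix.diagonal fun j => (r : ℝ) - (j : ℕ)

/-- The Frobenius norm. -/
noncomputable def frob {m n : ℕ} (A : Matrix (Fin m) (Fin n) ℝ) : ℝ :=
  Real.sqrt (∑ i, ∑ j, A i j ^ 2)

/-- The spectral norm (ℓ₂ operator norm) of a square matrix. -/
noncomputable def spec {N : ℕ} (A : Matrix (Fin N) (Fin N) ℝ) : ℝ :=
  ‖LinearMap.toContinuousLinearMap (Matrix.toEuclideanLin A)‖

/-- The Riemannian gradient `grad g(X) = (X Xᵀ − I) M X N_r − (1/2) X [Xᵀ M X, N_r]`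
of `g(X) = −(1/2) tr(Xᵀ M X N_r)`. -/
noncomputable def gradRisk {N r : ℕ} (M : Matrix (Fin N) (Fin N) ℝ)
    (X : Matrix (Fin N) (Fin r) ℝ) : Matrix (Fin N) (Fin r) ℝ :=
  (X * Xᵀ - 1) * M * X * Nr r
    - (1/2 : ℝ) • (X * (Xᵀ * M * X * Nr r - Nr r * (Xᵀ * M * X)))

/-! The gradient is linear in the data matrix, so `grad f − grad g` is the gradient for
`Δ = Y − M`, which regroups as `(½ X Xᵀ − I) Δ X N_r + ½ (X N_r Xᵀ) Δ X`. Each term is bounded by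
`‖A B C‖_F ≤ ‖A‖ ‖B‖_F ‖C‖` with `‖X‖_F = √r`: since `X Xᵀ` is an orthogonal projection,
`½ X Xᵀ − I = −½ I − ½ (I − X Xᵀ)` has spectral norm at most `1`, while `‖N_r‖ ≤ r` and
`‖X N_r Xᵀ‖ ≤ r`. The two terms contribute `r^{3/2} ‖Δ‖` and `½ r^{3/2} ‖Δ‖`. -/

open scoped Matrix.Norms.L2Operator

section Frobenius

variable {m n k : ℕ}

lemma frob_eq_norm_toLp (A : Matrix (Fin m) (Fin n) ℝ) :
    frob A =
      ‖(WithLp.toLp 2 fun p : Fin m × Fin n => A p.1 p.2 : EuclideanSpace ℝ (Fin m × Fin n))‖ := by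
  simp [frob, EuclideanSpace.norm_eq, Fintype.sum_prod_type]

lemma frob_add_le (A B : Matrix (Fin m) (Fin n) ℝ) : frob (A + B) ≤ frob A + frob B := by
  have hsum : (fun p : Fin m × Fin n => (A + B) p.1 p.2)
      = (fun p => A p.1 p.2) + (fun p => B p.1 p.2) := rfl
  simp only [frob_eq_norm_toLp]
  rw [hsum, WithLp.toLp_add]
  exact norm_add_le _ _

lemma frob_smul (c : ℝ) (A : Matrix (Fin m) (Fin n) ℝ) : frob (c • A) = |c| * frob A := by
  simp only [frob_eq_norm_toLp, ← Real.norm_eq_abs, ← norm_smul]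
  rfl

lemma frob_transpose (A : Matrix (Fin m) (Fin n) ℝ) : frob Aᵀ = frob A := by
  simp only [frob, transpose_apply]
  rw [Finset.sum_comm]

lemma frob_sq_eq_sum_norm_col (A : Matrix (Fin m) (Fin n) ℝ) :
    frob A ^ 2 = ∑ j, ‖(WithLp.toLp 2 (Aᵀ j) : EuclideanSpace ℝ (Fin m))‖ ^ 2 := by
  rw [frob, Real.sq_sqrt (by positivity), Finset.sum_comm]
  simp [EuclideanSpace.norm_sq_eq]

lemma frob_eq_sqrt_of_transpose_mul_self {r : ℕ} (X : Matrix (Fin n) (Fin r) ℝ) (hX : Xᵀ * X = 1) :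
    frob X = √r := by
  have hcol : ∀ j, ∑ i, X i j ^ 2 = (Xᵀ * X) j j := fun j => by simp [mul_apply, sq]
  rw [frob, Finset.sum_comm]
  simp [hcol, hX]

lemma frob_mul_le_opNorm_mul (A : Matrix (Fin m) (Fin n) ℝ) (B : Matrix (Fin n) (Fin k) ℝ) :
    frob (A * B) ≤ ‖A‖ * frob B := by
  refine le_of_pow_le_pow_left₀ two_ne_zero (mul_nonneg (norm_nonneg _) (Real.sqrt_nonneg _)) ?_
  rw [mul_pow, frob_sq_eq_sum_norm_col, frob_sq_eq_sum_norm_col, Finset.mul_sum]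
  refine Finset.sum_le_sum fun j _ => ?_
  rw [← mul_pow]
  exact pow_le_pow_left₀ (norm_nonneg _) (l2_opNorm_mulVec A (WithLp.toLp 2 (Bᵀ j))) 2

lemma frob_mul_le_mul_opNorm (A : Matrix (Fin m) (Fin n) ℝ) (B : Matrix (Fin n) (Fin k) ℝ) :
    frob (A * B) ≤ frob A * ‖B‖ := by
  have := frob_mul_le_opNorm_mul Bᵀ Aᵀ
  rwa [← transpose_mul, frob_transpose, frob_transpose, ← conjTranspose_eq_transpose_of_trivial,
    l2_opNorm_conjTranspose, mul_comm] at this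

end Frobenius

section OperatorNorm

variable {n r : ℕ}

lemma spec_eq_opNorm (A : Matrix (Fin n) (Fin n) ℝ) : spec A = ‖A‖ := rfl

lemma opNorm_Nr_le (r : ℕ) : ‖Nr r‖ ≤ r := by
  rw [Nr, l2_opNorm_diagonal]
  refine (pi_norm_le_iff_of_nonneg (Nat.cast_nonneg r)).mpr fun j => ?_
  have hj : ((j : ℕ) : ℝ) < r := by exact_mod_cast j.2
  rw [Real.norm_eq_abs, abs_le]
  constructor <;> linarith [Nat.cast_nonneg (α := ℝ) (j : ℕ)]

lemma opNorm_le_one_of_transpose_mul_self (X : Matrix (Fin n) (Fin r) ℝ) (hX : Xᵀ * X = 1) :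
    ‖X‖ ≤ 1 := by
  have h : ‖X‖ * ‖X‖ ≤ 1 := by
    rw [← l2_opNorm_conjTranspose_mul_self, conjTranspose_eq_transpose_of_trivial, hX]
    exact IsStarProjection.norm_le _ (.one _)
  nlinarith [norm_nonneg X]

lemma isStarProjection_mul_transpose (X : Matrix (Fin n) (Fin r) ℝ) (hX : Xᵀ * X = 1) :
    IsStarProjection (X * Xᵀ) where
  isIdempotentElem := by
    rw [IsIdempotentElem, Matrix.mul_assoc, ← Matrix.mul_assoc Xᵀ, hX, Matrix.one_mul]
  isSelfAdjoint := by
    rw [IsSelfAdjoint, star_eq_conjTranspose, conjTranspose_eq_transpose_of_trivial,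
      transpose_mul, transpose_transpose]

lemma opNorm_half_smul_mul_transpose_sub_one_le (X : Matrix (Fin n) (Fin r) ℝ)
    (hX : Xᵀ * X = 1) : ‖(1/2 : ℝ) • (X * Xᵀ) - 1‖ ≤ 1 := by
  have hsplit : (1/2 : ℝ) • (X * Xᵀ) - 1 = -((1/2 : ℝ) • (1 - X * Xᵀ) + (1/2 : ℝ) • 1) := by
    module
  have hP := (isStarProjection_mul_transpose X hX).one_sub.norm_le
  have h1 := IsStarProjection.norm_le _ (.one (Matrix (Fin n) (Fin n) ℝ))
  calc ‖(1/2 : ℝ) • (X * Xᵀ) - 1‖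
      ≤ ‖(1/2 : ℝ) • (1 - X * Xᵀ)‖ + ‖(1/2 : ℝ) • (1 : Matrix (Fin n) (Fin n) ℝ)‖ := by
        rw [hsplit, norm_neg]; exact norm_add_le _ _
    _ ≤ 1 := by rw [norm_smul, norm_smul, Real.norm_of_nonneg one_half_pos.le]; linarith

lemma opNorm_mul_Nr_mul_transpose_le (X : Matrix (Fin n) (Fin r) ℝ) (hX : Xᵀ * X = 1) :
    ‖X * Nr r * Xᵀ‖ ≤ r := by
  have hX1 := opNorm_le_one_of_transpose_mul_self X hX
  have hXt : ‖Xᵀ‖ = ‖X‖ := by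
    rw [← conjTranspose_eq_transpose_of_trivial, l2_opNorm_conjTranspose]
  calc ‖X * Nr r * Xᵀ‖ ≤ ‖X‖ * ‖Nr r‖ * ‖Xᵀ‖ :=
        (l2_opNorm_mul _ _).trans (by gcongr; exact l2_opNorm_mul _ _)
    _ ≤ 1 * r * 1 := by
        rw [hXt]; gcongr
        exact opNorm_Nr_le r
    _ = r := by ring

end OperatorNorm

section GradRisk

variable {N r : ℕ}

lemma gradRisk_sub (Y M : Matrix (Fin N) (Fin N) ℝ) (X : Matrix (Fin N) (Fin r) ℝ) :
    gradRisk Y X - gradRisk M X = gradRisk (Y - M) X := by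
  simp only [gradRisk, Matrix.mul_sub, Matrix.sub_mul]
  module

lemma gradRisk_eq (Δ : Matrix (Fin N) (Fin N) ℝ) (X : Matrix (Fin N) (Fin r) ℝ) :
    gradRisk Δ X = (X * Xᵀ - 1) * Δ * X * Nr r - (1/2 : ℝ) • (X * Xᵀ * Δ * X * Nr r)
      + (1/2 : ℝ) • (X * Nr r * Xᵀ * Δ * X) := by
  simp only [gradRisk, Matrix.mul_sub, Matrix.mul_assoc]
  module

lemma gradRisk_eq_add (Δ : Matrix (Fin N) (Fin N) ℝ) (X : Matrix (Fin N) (Fin r) ℝ) :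
    gradRisk Δ X = ((1/2 : ℝ) • (X * Xᵀ) - 1) * Δ * X * Nr r
      + (1/2 : ℝ) • (X * Nr r * Xᵀ * Δ * X) := by
  rw [gradRisk_eq]
  simp only [Matrix.sub_mul, Matrix.smul_mul, Matrix.one_mul]
  module

lemma frob_gradRisk_le (Δ : Matrix (Fin N) (Fin N) ℝ) (X : Matrix (Fin N) (Fin r) ℝ)
    (hX : Xᵀ * X = 1) : frob (gradRisk Δ X) ≤ 3/2 * (r * √r) * ‖Δ‖ := by
  have hfX := frob_eq_sqrt_of_transpose_mul_self X hX
  have hQ := opNorm_half_smul_mul_transpose_sub_one_le X hX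
  have hK := opNorm_mul_Nr_mul_transpose_le X hX
  have hNr := opNorm_Nr_le r
  have h₁ : frob (((1/2 : ℝ) • (X * Xᵀ) - 1) * Δ * X * Nr r) ≤ ‖Δ‖ * √r * r :=
    calc _ ≤ ‖((1/2 : ℝ) • (X * Xᵀ) - 1) * Δ‖ * frob X * ‖Nr r‖ :=
          (frob_mul_le_mul_opNorm _ _).trans (by gcongr; exact frob_mul_le_opNorm_mul _ _)
      _ ≤ 1 * ‖Δ‖ * √r * r := by
          rw [hfX]; gcongr
          exact (l2_opNorm_mul _ _).trans (by gcongr)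
      _ = ‖Δ‖ * √r * r := by ring
  have h₂ : frob (X * Nr r * Xᵀ * Δ * X) ≤ r * ‖Δ‖ * √r :=
    calc _ ≤ ‖X * Nr r * Xᵀ * Δ‖ * frob X := frob_mul_le_opNorm_mul _ _
      _ ≤ r * ‖Δ‖ * √r := by
          rw [hfX]; gcongr
          exact (l2_opNorm_mul _ _).trans (by gcongr)
  calc frob (gradRisk Δ X)
      ≤ frob (((1/2 : ℝ) • (X * Xᵀ) - 1) * Δ * X * Nr r)
        + |1/2| * frob (X * Nr r * Xᵀ * Δ * X) := by
        rw [gradRisk_eq_add, ← frob_smul]; exact frob_add_le _ _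
    _ ≤ ‖Δ‖ * √r * r + 1/2 * (r * ‖Δ‖ * √r) := by
        rw [abs_of_pos one_half_pos]; gcongr
    _ = 3/2 * (r * √r) * ‖Δ‖ := by ring

end GradRisk

lemma rpow_three_halves_eq_mul_sqrt {x : ℝ} (hx : 0 ≤ x) : x ^ ((3 : ℝ)/2) = x * √x := by
  rw [show (3 : ℝ)/2 = 1 + 1/2 by norm_num, Real.rpow_add' hx (by norm_num), Real.rpow_one,
    ← Real.sqrt_eq_rpow]

theorem stmt_15_general {N r : ℕ} (Y M : Matrix (Fin N) (Fin N) ℝ)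
    (X : Matrix (Fin N) (Fin r) ℝ) (hX : Xᵀ * X = 1) :
    gradRisk Y X - gradRisk M X =
      (X * Xᵀ - 1) * (Y - M) * X * Nr r
        - (1/2 : ℝ) • (X * Xᵀ * (Y - M) * X * Nr r)
        + (1/2 : ℝ) • (X * Nr r * Xᵀ * (Y - M) * X) ∧
    frob (gradRisk Y X - gradRisk M X) ≤
      (3/2 : ℝ) * (r : ℝ) ^ ((3 : ℝ)/2) * spec (Y - M) := by
  rw [gradRisk_sub, spec_eq_opNorm, rpow_three_halves_eq_mul_sqrt (Nat.cast_nonneg r)]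
  exact ⟨gradRisk_eq (Y - M) X, frob_gradRisk_le (Y - M) X hX⟩

/-- uniform gradient deviation bound, matrix sensing: for symmetric
`Y`, `M`, `Δ = Y − M`, and every `X ∈ St(N,r)`,
`‖grad f(X) − grad g(X)‖_F = ‖(X Xᵀ − I) Δ X N_r − (1/2) X Xᵀ Δ X N_r + (1/2) X N_r Xᵀ Δ X‖_F
  ≤ (3/2) r^{3/2} ‖Y − M‖` (spectral norm). -/
theorem stmt_15 {N r : ℕ} (Y M : Matrix (Fin N) (Fin N) ℝ)
    (hY : Y.IsSymm) (hM : M.IsSymm)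
    (X : Matrix (Fin N) (Fin r) ℝ) (hX : Xᵀ * X = 1) :
    gradRisk Y X - gradRisk M X =
      (X * Xᵀ - 1) * (Y - M) * X * Nr r
        - (1/2 : ℝ) • (X * Xᵀ * (Y - M) * X * Nr r)
        + (1/2 : ℝ) • (X * Nr r * Xᵀ * (Y - M) * X) ∧
    frob (gradRisk Y X - gradRisk M X) ≤
      (3/2 : ℝ) * (r : ℝ) ^ ((3 : ℝ)/2) * spec (Y - M) :=
  stmt_15_general Y M X hX
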